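/- The upper bound 2 + H_α(w) in the alphabetic redundancy chain is asymptotically tight: for w_ε = (ε, 1-2ε, ε) with a ∈ (1/2,1) fixed and α = 1/(1+log₂ a), as ε → 0⁺ the Rényi entropy H_α(w_ε) → 0 while the optimal alphabetic cost L_a^ā(w_ε) → 2; hence sup over w of (L_a^ā(w) - H_α(w)) ≥ 2. -/

import Mathlib

open Real Finset

/-- Full binary tree: every internal node has two children. -/
inductive BTree where
  | leaf : BTree
  | node : BTree → BTree → BTree

namespace BTree

/-- Depths of the leaves, read in left-to-right (inorder) order. -/
def depths : BTree → List ℕ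
  | leaf => [0]
  | node l r => (l.depths ++ r.depths).map (· + 1)

/-- Number of leaves. -/
def numLeaves (t : BTree) : ℕ := t.depths.length

/-- The splitting point: smallest (1-based) leaf index of the right subtree. -/
def splitPoint : BTree → ℕ
  | leaf => 1
  | node l _ => l.numLeaves + 1

end BTree

/-- Binary tree possibly having single-child internal nodes. -/
inductive PTree where
  | leaf : PTree
  | node1 : PTree → PTree
  | node2 : PTree → PTree → PTree

def PTree.depths : PTree → List ℕ
  | .leaf => [0]
  | .node1 t => t.depths.map (· + 1)
  | .node2 l r => (l.depths ++ r.depths).map (· + 1)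

/-- `SubtreeAt t' o t` : `t'` is a subtree of `t` whose leaves are the leaves
`o, o+1, …` (0-based offset `o`) of `t`. -/
inductive SubtreeAt : BTree → ℕ → BTree → Prop
  | refl (t : BTree) : SubtreeAt t 0 t
  | left {t' : BTree} {o : ℕ} {l r : BTree} : SubtreeAt t' o l → SubtreeAt t' o (BTree.node l r)
  | right {t' : BTree} {o : ℕ} {l r : BTree} : SubtreeAt t' o r →
      SubtreeAt t' (l.numLeaves + o) (BTree.node l r)

/-- Weighted exponential cost `∑ w(i)·a^{l(i)}` of a tree, weights given as a list. -/
noncomputable def cost (a : ℝ) (ws : List ℝ) (t : BTree) : ℝ :=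
  (List.zipWith (fun wi d => wi * a ^ d) ws t.depths).sum

/-- `L_a(w,l) = log_a ∑ w(i) a^{l(i)}`, `Fin`-indexed. -/
noncomputable def La {n : ℕ} (a : ℝ) (w : Fin n → ℝ) (l : Fin n → ℕ) : ℝ :=
  Real.logb a (∑ i, w i * a ^ (l i))

/-- `L_a(w,l)`, ℕ-indexed with `n` symbols. -/
noncomputable def LaN (a : ℝ) (n : ℕ) (w : ℕ → ℝ) (l : ℕ → ℕ) : ℝ :=
  Real.logb a (∑ i ∈ Finset.range n, w i * a ^ (l i))

/-- Costs achievable by alphabetic binary trees on `n` leaves with weights `w`. -/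
noncomputable def AlphaSet (a : ℝ) (n : ℕ) (w : ℕ → ℝ) : Set ℝ :=
  {x | ∃ (lT : ℕ → ℕ) (T : BTree), T.depths = (List.range n).map lT ∧ x = LaN a n w lT}

/-- The indices `j..j+k` form a plateau of `l` which is a strict local minimum,
with strictly larger values at indices `j-1` and `j+k+1`, entirely interior to `0..n-1`. -/
def PlateauMin (n : ℕ) (l : ℕ → ℕ) (j k : ℕ) : Prop :=
  0 < j ∧ j + k + 1 < n ∧ l j < l (j - 1) ∧ (∀ m, j ≤ m → m ≤ j + k → l m = l j) ∧
    l j < l (j + k + 1)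

/-- The natural number a binary codeword (MSB first) represents. -/
def codeToNat (c : List Bool) : ℕ := c.foldl (fun n b => 2 * n + cond b 1 0) 0

/-- The `k`-bit binary codeword (MSB first) representing `m`. -/
def natToCode (k m : ℕ) : List Bool := (List.range k).map (fun i => m.testBit (k - 1 - i))

/-!
An alphabetic tree on three leaves has depth sequence `(1,2,2)` or `(2,2,1)`, so the heavy middle
symbol of `w_ε = (ε, 1-2ε, ε)` always sits at depth 2 and the optimal cost is
`log_a ((1-ε) a² + ε a) → log_a a² = 2`. Meanwhile the Rényi sum `2 ε^α + (1-2ε)^α` tends to `1`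
(as `α > 0`), so `H_α(w_ε) → 0` and the redundancy tends to `2`.
-/

open Filter Topology

namespace BTree

theorem one_le_length_depths (t : BTree) : 1 ≤ t.depths.length := by
  induction t with
  | leaf => simp [depths]
  | node l r _ _ => simp only [depths, List.length_map, List.length_append]; omega

theorem depths_eq_of_length_eq_one {t : BTree} (h : t.depths.length = 1) : t.depths = [0] := by
  cases t with
  | leaf => rfl
  | node l r =>
    have := l.one_le_length_depths
    have := r.one_le_length_depths
    simp only [depths, List.length_map, List.length_append] at h
    omega

theorem depths_eq_of_length_eq_two {t : BTree} (h : t.depths.length = 2) : t.depths = [1, 1] := by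
  cases t with
  | leaf => simp [depths] at h
  | node l r =>
    have := l.one_le_length_depths
    have := r.one_le_length_depths
    simp only [depths, List.length_map, List.length_append] at h
    simp [depths, depths_eq_of_length_eq_one (t := l) (by omega),
      depths_eq_of_length_eq_one (t := r) (by omega)]

theorem depths_eq_of_length_eq_three {t : BTree} (h : t.depths.length = 3) :
    t.depths = [1, 2, 2] ∨ t.depths = [2, 2, 1] := by
  cases t with
  | leaf => simp [depths] at h
  | node l r =>
    have := l.one_le_length_depths
    have := r.one_le_length_depths
    simp only [depths, List.length_map, List.length_append] at h
    rcases Nat.lt_or_ge l.depths.length 2 with hl | hl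
    · left
      simp [depths, depths_eq_of_length_eq_one (t := l) (by omega),
        depths_eq_of_length_eq_two (t := r) (by omega)]
    · right
      simp [depths, depths_eq_of_length_eq_two (t := l) (by omega),
        depths_eq_of_length_eq_one (t := r) (by omega)]

end BTree

theorem eq_of_mem_alphaSet_three_of_symm {a x : ℝ} {w : ℕ → ℝ} (hw : w 0 = w 2)
    (hx : x ∈ AlphaSet a 3 w) : x = Real.logb a (w 0 * a + (w 1 + w 2) * a ^ 2) := by
  obtain ⟨l, T, hT, rfl⟩ := hx
  have hT' : T.depths = [l 0, l 1, l 2] := by simp [hT, List.range_succ]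
  rcases BTree.depths_eq_of_length_eq_three (t := T) (by simp [hT']) with h | h <;>
  · rw [hT'] at h
    obtain ⟨h0, h1, h2⟩ : l 0 = _ ∧ l 1 = _ ∧ l 2 = _ := by simpa using h
    rw [LaN, Finset.sum_range_succ, Finset.sum_range_succ, Finset.sum_range_one, h0, h1, h2,
      hw]
    ring_nf

theorem one_add_logb_two_pos {a : ℝ} (ha : 1 / 2 < a) : 0 < 1 + Real.logb 2 a := by
  have : Real.logb 2 (1 / 2) < Real.logb 2 a :=
    Real.logb_lt_logb (by norm_num) (by norm_num) ha
  rw [one_div, Real.logb_inv, Real.logb_self_eq_one one_lt_two] at this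
  linarith

theorem tendsto_renyiEntropy_three_nhds_zero {α : ℝ} (hα : 0 < α) :
    Tendsto (fun ε : ℝ => 1 / (1 - α) * Real.logb 2 (ε ^ α + (1 - 2 * ε) ^ α + ε ^ α))
      (𝓝 0) (𝓝 0) := by
  have hpow : Continuous fun x : ℝ => x ^ α := Real.continuous_rpow_const hα.le
  have hsum : Continuous fun ε : ℝ => ε ^ α + (1 - 2 * ε) ^ α + ε ^ α := by fun_prop
  have hsum0 : (0 : ℝ) ^ α + (1 - 2 * 0) ^ α + 0 ^ α = 1 := by
    simp [Real.zero_rpow hα.ne']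
  have hcont := (hsum.continuousAt (x := 0)).logb (b := 2) (by rw [hsum0]; exact one_ne_zero)
  simpa [hsum0, Real.zero_rpow hα.ne'] using hcont.tendsto.const_mul (1 / (1 - α))

theorem tendsto_logb_symm_three_cost_nhds_zero {a : ℝ} (ha0 : 0 < a) (ha1 : a ≠ 1) :
    Tendsto (fun ε : ℝ => Real.logb a (ε * a + (1 - ε) * a ^ 2)) (𝓝 0) (𝓝 2) := by
  have hcont : ContinuousAt (fun ε : ℝ => Real.logb a (ε * a + (1 - ε) * a ^ 2)) 0 :=
    (by fun_prop : Continuous fun ε : ℝ => ε * a + (1 - ε) * a ^ 2).continuousAt.logb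
      (by simp [ha0.ne'])
  have hval : Real.logb a (a ^ 2) = 2 := by
    rw [Real.logb_pow, Real.logb_self_eq_one_iff.mpr ⟨ha0.ne', ha1, by linarith⟩]
    norm_num
  simpa [hval] using hcont.tendsto

/-- for `w_ε = (ε, 1-2ε, ε)`, as `ε → 0⁺` the Rényi entropy tends
to `0` while the optimal alphabetic cost tends to `2`; hence no constant
`c < 2` bounds the alphabetic redundancy `L_a^ā(w) - H_α(w)`. -/
theorem stmt15 (a : ℝ) (ha : 1 / 2 < a) (ha1 : a < 1)
    (α : ℝ) (hα : α = 1 / (1 + Real.logb 2 a))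
    (Hf : ℝ → ℝ)
    (hHf : ∀ ε, Hf ε = (1 / (1 - α)) *
      Real.logb 2 (ε ^ α + (1 - 2 * ε) ^ α + ε ^ α))
    (Lab : ℝ → ℝ)
    (hLab : ∀ ε ∈ Set.Ioo (0 : ℝ) (1 / 2),
      IsLeast (AlphaSet a 3 (fun i => if i = 1 then 1 - 2 * ε else ε)) (Lab ε)) :
    Filter.Tendsto Hf (nhdsWithin 0 (Set.Ioi 0)) (nhds 0) ∧
    Filter.Tendsto Lab (nhdsWithin 0 (Set.Ioi 0)) (nhds 2) ∧
    ∀ c : ℝ, (∀ ε ∈ Set.Ioo (0 : ℝ) (1 / 2), Lab ε - Hf ε ≤ c) → 2 ≤ c := by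
  have hα0 : 0 < α := hα ▸ one_div_pos.mpr (one_add_logb_two_pos ha)
  have hIoo : Set.Ioo (0 : ℝ) (1 / 2) ∈ 𝓝[>] 0 := Ioo_mem_nhdsGT (by norm_num)
  have hH : Tendsto Hf (𝓝[>] 0) (𝓝 0) := by
    rw [funext hHf]
    exact (tendsto_renyiEntropy_three_nhds_zero hα0).mono_left nhdsWithin_le_nhds
  have hL : Tendsto Lab (𝓝[>] 0) (𝓝 2) := by
    refine ((tendsto_logb_symm_three_cost_nhds_zero (by linarith) ha1.ne).mono_left
      nhdsWithin_le_nhds).congr' (eventuallyEq_of_mem hIoo fun ε hε => ?_)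
    rw [eq_of_mem_alphaSet_three_of_symm (by simp) (hLab ε hε).1]
    simp only [Nat.zero_ne_one, Nat.succ_ne_self, if_true, if_false]
    ring_nf
  refine ⟨hH, hL, fun c hc => ?_⟩
  exact le_of_tendsto (by simpa using hL.sub hH) (eventually_of_mem hIoo hc)
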